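/- arXiv:2005.12407 — 2 statements merged into one kernel-verified Lean document; each statement's English description precedes it below -/
import Mathlib

section
/- Let h : [0,∞) → ℝ be differentiable, γ > 0, ρ ∈ [0,1), and suppose h(0) = h₀ < 0 and h'(t) ≥ γ·|h(t)|^ρ for all t ≥ 0 with h(t) < 0. Then there exists T ≤ |h₀|^{1-ρ}/(γ(1-ρ)) such that h(T) ≥ 0. -/
theorem fcbf_finite_time (h : ℝ → ℝ) (γ ρ : ℝ) (hγ : 0 < γ) (hρ0 : 0 ≤ ρ) (hρ1 : ρ < 1)
    (hdiff : Differentiable ℝ h) (h0 : h 0 < 0)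
    (hineq : ∀ t, 0 ≤ t → h t < 0 → γ * |h t| ^ ρ ≤ deriv h t) :
    ∃ T, 0 ≤ T ∧ T ≤ |h 0| ^ (1 - ρ) / (γ * (1 - ρ)) ∧ 0 ≤ h T := by
  by_contra hco
  push_neg at hco
  have h1ρ : (0:ℝ) < 1 - ρ := by linarith
  set c : ℝ := γ * (1 - ρ) with hcdef
  have hcpos : 0 < c := mul_pos hγ h1ρ
  set Tm : ℝ := |h 0| ^ (1 - ρ) / c with hTmdef
  have hTmpos : 0 < Tm :=
    div_pos (Real.rpow_pos_of_pos (abs_pos.mpr h0.ne) _) hcpos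
  have hneg : ∀ t ∈ Set.Icc (0:ℝ) Tm, h t < 0 := fun t ht => hco t ht.1 ht.2
  set φ : ℝ → ℝ := fun t => (-h t) ^ (1 - ρ) + c * t with hφdef
  have hφderiv : ∀ t ∈ Set.Icc (0:ℝ) Tm,
      HasDerivAt φ ((-deriv h t) * (1 - ρ) * (-h t) ^ (1 - ρ - 1) + c) t := by
    intro t ht
    have hx : 0 < -h t := by linarith [hneg t ht]
    have hd : HasDerivAt (fun s => -h s) (-deriv h t) t :=
      ((hdiff t).hasDerivAt).neg
    have hrp : HasDerivAt (fun s => (-h s) ^ (1 - ρ))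
        ((-deriv h t) * (1 - ρ) * (-h t) ^ (1 - ρ - 1)) t :=
      hd.rpow_const (Or.inl hx.ne')
    simpa [hφdef, Pi.add_def] using hrp.add ((hasDerivAt_id t).const_mul c)
  have hanti : AntitoneOn φ (Set.Icc 0 Tm) := by
    apply antitoneOn_of_deriv_nonpos (convex_Icc 0 Tm)
    · exact fun t ht => (hφderiv t ht).continuousAt.continuousWithinAt
    · intro t ht
      rw [interior_Icc] at ht
      exact (hφderiv t (Set.mem_Icc_of_Ioo ht)).differentiableAt.differentiableWithinAt
    · intro t ht
      rw [interior_Icc] at ht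
      have htI : t ∈ Set.Icc (0:ℝ) Tm := Set.mem_Icc_of_Ioo ht
      rw [(hφderiv t htI).deriv]
      have hx : 0 < -h t := by linarith [hneg t htI]
      have habs : |h t| = -h t := abs_of_neg (hneg t htI)
      have hd' : γ * (-h t) ^ ρ ≤ deriv h t := by
        rw [← habs]; exact hineq t htI.1 (hneg t htI)
      have hpow : (-h t) ^ ρ * (-h t) ^ (1 - ρ - 1) = 1 := by
        rw [← Real.rpow_add hx]
        norm_num
      have hpos2 : 0 < (1 - ρ) * (-h t) ^ (1 - ρ - 1) :=
        mul_pos h1ρ (Real.rpow_pos_of_pos hx _)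
      have key : c ≤ deriv h t * ((1 - ρ) * (-h t) ^ (1 - ρ - 1)) := by
        have := mul_le_mul_of_nonneg_right hd' hpos2.le
        calc c = γ * (-h t) ^ ρ * ((1 - ρ) * (-h t) ^ (1 - ρ - 1)) := by
                  rw [hcdef]; linear_combination (-(γ * (1 - ρ))) * hpow
             _ ≤ deriv h t * ((1 - ρ) * (-h t) ^ (1 - ρ - 1)) := this
      nlinarith [key]
  have hle : φ Tm ≤ φ 0 :=
    hanti (Set.left_mem_Icc.mpr hTmpos.le) (Set.right_mem_Icc.mpr hTmpos.le) hTmpos.le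
  have h0' : (-h 0) ^ (1 - ρ) = c * Tm := by
    rw [hTmdef, abs_of_neg h0]
    field_simp
  have hTneg : h Tm < 0 := hneg Tm (Set.right_mem_Icc.mpr hTmpos.le)
  have hTpow : 0 < (-h Tm) ^ (1 - ρ) := Real.rpow_pos_of_pos (by linarith) _
  simp only [hφdef] at hle
  rw [mul_zero, add_zero, h0'] at hle
  linarith
end

section
/- Let h : [0,∞) → ℝ be differentiable and let μ : ℝ → ℝ be locally Lipschitz, strictly increasing with μ(0) = 0. If h(0) ≥ 0 and h'(t) ≥ -μ(h(t)) for all t ≥ 0, then h(t) ≥ 0 for all t ≥ 0. -/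
theorem zcbf_forward_invariance (h : ℝ → ℝ) (μ : ℝ → ℝ)
    (hμlip : LocallyLipschitz μ) (hμmono : StrictMono μ) (hμ0 : μ 0 = 0)
    (hdiff : Differentiable ℝ h) (h0 : 0 ≤ h 0)
    (hineq : ∀ t, 0 ≤ t → -μ (h t) ≤ deriv h t) :
    ∀ t, 0 ≤ t → 0 ≤ h t := by
  intro T hT
  by_contra hneg
  push_neg at hneg
  set S : Set ℝ := {s | s ∈ Set.Icc (0:ℝ) T ∧ 0 ≤ h s} with hS
  have hne : S.Nonempty := ⟨0, ⟨le_refl 0, hT⟩, h0⟩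
  have hbdd : BddAbove S := ⟨T, fun x hx => hx.1.2⟩
  set t0 := sSup S with ht0def
  have ht0mem : 0 ≤ t0 := le_csSup hbdd ⟨⟨le_refl 0, hT⟩, h0⟩
  have ht0T : t0 ≤ T := csSup_le hne fun x hx => hx.1.2
  have hcont : Continuous h := hdiff.continuous
  have hh0 : 0 ≤ h t0 := by
    -- t0 is in closure of S, and h ≥ 0 on S
    have : t0 ∈ closure S := csSup_mem_closure hne hbdd
    have hcl : closure S ⊆ {s | 0 ≤ h s} := by
      apply closure_minimal (fun x hx => hx.2)
      exact isClosed_le continuous_const hcont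
    exact hcl this
  have ht0lt : t0 < T := by
    rcases lt_or_eq_of_le ht0T with h'|h'
    · exact h'
    · exfalso; rw [h'] at hh0; linarith
  -- on (t0, T], h < 0
  have hlt : ∀ s, t0 < s → s ≤ T → h s < 0 := by
    intro s hs hsT
    by_contra hcon
    push_neg at hcon
    have : s ∈ S := ⟨⟨le_trans ht0mem hs.le, hsT⟩, hcon⟩
    exact absurd (le_csSup hbdd this) (not_le.mpr hs)
  obtain ⟨c, hc, hderiv⟩ := exists_deriv_eq_slope h ht0lt hcont.continuousOn
    (fun x _ => hdiff.differentiableAt.differentiableWithinAt)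
  have hc0 : h c < 0 := hlt c hc.1 hc.2.le
  have h1 : deriv h c < 0 := by
    rw [hderiv]
    apply div_neg_of_neg_of_pos <;> [linarith; linarith [hc.1, hc.2]]
  have h2 : -μ (h c) ≤ deriv h c := hineq c (le_trans ht0mem hc.1.le)
  have : μ (h c) < μ 0 := hμmono hc0
  rw [hμ0] at this
  linarith
end
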